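/- arXiv:2010.05735 — 2 statements merged into one kernel-verified Lean document; each statement's English description precedes it below -/
import Mathlib

section
/- For every k ≥ 5 and n ≥ k(k+1)·2^k, there exists a tournament on n vertices that does not contain the k-th power of a directed path of length k(k+1)·n/2^k. -/
/-- A tournament: irreflexive, and exactly one direction between distinct vertices. -/
def IsTournament {V : Type*} (T : V → V → Prop) : Prop :=
  (∀ v : V, ¬ T v v) ∧ ∀ u v : V, u ≠ v → (T u v ↔ ¬ T v u)

/-- `T` contains the k-th power of a directed path on `L` vertices. -/
def ContainsPathPower {V : Type*} (T : V → V → Prop) (k L : ℕ) : Prop :=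
  ∃ v : Fin L → V, Function.Injective v ∧
    ∀ i j : Fin L, (i : ℕ) < (j : ℕ) → (j : ℕ) ≤ (i : ℕ) + k → T (v i) (v j)

/-!
Let `b = 2 ^ (k - 1)` and `m = k (k + 1) / 2`. The `k`-th power of a path on `m` vertices has
`(k - 1) m` edges, and there are fewer than `b ^ m = 2 ^ ((k - 1) m)` injective placements of it
in `b` vertices, so by a union bound some tournament `S` on `b` vertices contains none.
Cut the `n` vertices into `n / b + 1` blocks of size at most `b`, orient every edge between two
blocks forwards, and copy `S` inside each block. Since `k ≥ 1`, a `k`-th path power visits the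
blocks in nondecreasing order, so it meets each block in a window of fewer than `m` consecutive
vertices and has at most `(m - 1) (n / b + 1) < m n / b = k (k + 1) n / 2 ^ k` vertices.
-/

open Finset

section Tournament

variable {V W : Type*}

theorem IsTournament.comap {T : V → V → Prop} (hT : IsTournament T) {f : W → V}
    (hf : Function.Injective f) : IsTournament fun u v => T (f u) (f v) :=
  ⟨fun u => hT.1 (f u), fun _ _ huv => hT.2 _ _ (hf.ne huv)⟩

theorem ContainsPathPower.of_comap {T : V → V → Prop} {f : W → V} (hf : Function.Injective f)
    {k L : ℕ} (h : ContainsPathPower (fun u v => T (f u) (f v)) k L) :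
    ContainsPathPower T k L :=
  let ⟨v, hv, hpath⟩ := h
  ⟨f ∘ v, hf.comp hv, hpath⟩

theorem IsTournament.prodLex {ι : Type*} [LinearOrder ι] {S : V → V → Prop}
    (hS : IsTournament S) : IsTournament (Prod.Lex (· < ·) S : ι × V → ι × V → Prop) := by
  refine ⟨fun p => ?_, fun p q hpq => ?_⟩
  · simp [Prod.lex_iff, hS.1]
  · rcases p with ⟨i, x⟩
    rcases q with ⟨j, y⟩
    simp only [Prod.lex_iff]
    rcases lt_trichotomy i j with h | rfl | h
    · simp [h, h.ne, h.ne', h.not_gt]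
    · have hxy : x ≠ y := fun h => hpq (by rw [h])
      simp [hS.2 x y hxy]
    · simp [h, h.ne', h.not_gt]

/-- Tournaments on a linear order `V`, parametrised by `f : Sym2 V → Bool`: the sample space of
the union bound. -/
def orient [LinearOrder V] (f : Sym2 V → Bool) (u v : V) : Prop :=
  u ≠ v ∧ f s(u, v) = decide (u < v)

theorem isTournament_orient [LinearOrder V] (f : Sym2 V → Bool) : IsTournament (orient f) := by
  refine ⟨fun v h => h.1 rfl, fun u v huv => ?_⟩
  rw [orient, orient, Sym2.eq_swap]
  rcases huv.lt_or_gt with h | h <;> cases f s(u, v) <;> simp [h, h.not_gt, huv, huv.symm]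

end Tournament

section Blowup

variable {ι V : Type*} [LinearOrder ι]

theorem Monotone.exists_window_of_le_card_fiber {L m : ℕ} {g : Fin L → ι} (hg : Monotone g)
    {c : ι} (hm : m ≤ #{i | g i = c}) :
    ∃ (a : ℕ) (h : a + m ≤ L), ∀ t : Fin m, g (Fin.castLE h (Fin.natAdd a t)) = c := by
  rcases Nat.eq_zero_or_pos m with rfl | hm0
  · exact ⟨0, by simp, fun t => t.elim0⟩
  obtain ⟨i₀, i₁, hi₀, hi₁, hspan⟩ :
      ∃ i₀ i₁ : Fin L, g i₀ = c ∧ g i₁ = c ∧ (i₀ : ℕ) + m ≤ i₁ + 1 := by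
    set F : Finset (Fin L) := {i | g i = c}
    have hF : F.Nonempty := card_pos.mp (by omega)
    have hsub : F ⊆ Icc (F.min' hF) (F.max' hF) :=
      fun i hi => mem_Icc.mpr ⟨F.min'_le i hi, F.le_max' i hi⟩
    have := card_le_card hsub
    rw [Fin.card_Icc] at this
    exact ⟨_, _, (mem_filter.mp (F.min'_mem hF)).2, (mem_filter.mp (F.max'_mem hF)).2, by omega⟩
  refine ⟨i₀, by omega, fun t => le_antisymm ?_ ?_⟩
  · exact (hg (Fin.le_iff_val_le_val.mpr (by simp; omega))).trans_eq hi₁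
  · exact hi₀.symm.trans_le (hg (Fin.le_iff_val_le_val.mpr (by simp)))

variable [Fintype ι]

theorem ContainsPathPower.le_mul_card_of_prodLex {S : V → V → Prop} {k m L : ℕ} (hk : 0 < k)
    (hS : ¬ ContainsPathPower S k m)
    (h : ContainsPathPower (Prod.Lex (· < ·) S : ι × V → ι × V → Prop) k L) :
    L ≤ (m - 1) * Fintype.card ι := by
  obtain ⟨v, hv, hpath⟩ := h
  have hmono : Monotone (Prod.fst ∘ v) := by
    cases L with
    | zero => exact fun i => i.elim0
    | succ L =>
      refine Fin.monotone_iff_le_succ.mpr fun i => ?_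
      rcases Prod.lex_iff.mp (hpath i.castSucc i.succ (by simp) (by simp; omega)) with h | ⟨h, -⟩
      exacts [h.le, h.le]
  have hfiber : ∀ c : ι, #{i | (Prod.fst ∘ v) i = c} ≤ m - 1 := by
    intro c
    by_contra! hlt
    obtain ⟨a, ha, hc⟩ := hmono.exists_window_of_le_card_fiber (m := m) (c := c) (by omega)
    set e : Fin m → Fin L := fun t => Fin.castLE ha (Fin.natAdd a t)
    replace hc : ∀ t, (v (e t)).1 = c := hc
    refine hS ⟨fun t => (v (e t)).2, fun t t' htt' => ?_, fun i j hij hjk => ?_⟩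
    · have := congrArg Fin.val (hv (Prod.ext ((hc t).trans (hc t').symm) htt'))
      simp only [e, Fin.val_castLE, Fin.val_natAdd, Nat.add_left_cancel_iff] at this
      exact Fin.ext this
    · have := hpath (e i) (e j) (by simp [e]; omega) (by simp [e]; omega)
      rw [Prod.lex_iff] at this
      simpa [hc i, hc j] using this
  simpa using card_le_mul_card_image_of_maps_to (s := univ) (t := univ)
    (fun _ _ => mem_univ _) (m - 1) (fun c _ => hfiber c)

end Blowup

section Counting

theorem card_mul_two_pow_le_of_eqOn {α : Type*} [Fintype α] [DecidableEq α]
    (s : Finset (α → Bool)) (D : Finset α) (h : ∀ f ∈ s, ∀ g ∈ s, ∀ x ∈ D, f x = g x) :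
    #s * 2 ^ #D ≤ 2 ^ Fintype.card α := by
  have hs : #s ≤ 2 ^ (Fintype.card α - #D) := by
    calc #s ≤ #(univ : Finset ((Dᶜ : Finset α) → Bool)) := by
          refine card_le_card_of_injOn (fun f x => f x) (fun _ _ => mem_univ _) ?_
          intro f hf g hg hfg
          funext x
          by_cases hx : x ∈ D
          · exact h f hf g hg x hx
          · exact congrFun hfg ⟨x, mem_compl.mpr hx⟩
      _ = 2 ^ (Fintype.card α - #D) := by simp
  calc #s * 2 ^ #D ≤ 2 ^ (Fintype.card α - #D) * 2 ^ #D := Nat.mul_le_mul_right _ hs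
    _ = 2 ^ Fintype.card α := by rw [← pow_add, Nat.sub_add_cancel (card_le_univ D)]

def pathPowerPairs (m k : ℕ) : Finset (Fin m × Fin m) :=
  {p | (p.1 : ℕ) < p.2 ∧ (p.2 : ℕ) ≤ p.1 + k}

theorem card_pathPowerPairs {m k : ℕ} (hkm : k ≤ m) :
    #(pathPowerPairs m k) * 2 + k * (k + 1) = 2 * k * m := by
  have hfiber : ∀ j : Fin m, #{p ∈ pathPowerPairs m k | p.2 = j} = (j : ℕ) - ((j : ℕ) - k) := by
    intro j
    rw [← Nat.card_Ico]
    refine card_nbij (fun p => (p.1 : ℕ)) (fun p hp => ?_) (fun p hp q hq hpq => ?_) fun x hx => ?_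
    · simp only [mem_coe, pathPowerPairs, mem_filter, mem_univ, true_and] at hp
      simp only [mem_coe, mem_Ico]
      omega
    · simp only [mem_coe, pathPowerPairs, mem_filter, mem_univ, true_and] at hp hq
      exact Prod.ext (Fin.ext hpq) (hp.2.trans hq.2.symm)
    · obtain ⟨h₁, h₂⟩ : (j : ℕ) - k ≤ x ∧ x < j := mem_Ico.mp hx
      refine ⟨(⟨x, by omega⟩, j), ?_, rfl⟩
      simp only [mem_coe, pathPowerPairs, mem_filter, mem_univ, true_and, and_true]
      exact ⟨h₂, by omega⟩
  have hsum : ∀ m ≥ k, (∑ x ∈ range m, (x - (x - k))) * 2 + k * (k + 1) = 2 * k * m := by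
    intro m hm
    induction m, hm using Nat.le_induction with
    | base =>
      rw [sum_congr rfl fun x hx => by rw [Nat.sub_eq_zero_of_le (mem_range.mp hx).le, Nat.sub_zero],
        sum_range_id_mul_two]
      cases k <;> simp; ring
    | succ m hkm ih =>
      rw [sum_range_succ, add_mul, add_right_comm, ih, Nat.sub_sub_self hkm]
      ring
  rw [card_eq_sum_card_fiberwise (f := Prod.snd) (t := univ) fun _ _ => mem_univ _,
    sum_congr rfl fun j _ => hfiber j, Fin.sum_univ_eq_sum_range (fun x => x - (x - k)),
    hsum m hkm]

variable {V : Type*} [LinearOrder V] [Fintype V]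

open Classical in
theorem card_pathPower_orient_mul_le (k : ℕ) {m : ℕ} (w : Fin m ↪ V) :
    #{f : Sym2 V → Bool | ∀ i j : Fin m, (i : ℕ) < j → (j : ℕ) ≤ i + k → orient f (w i) (w j)} *
      2 ^ #(pathPowerPairs m k) ≤ 2 ^ Fintype.card (Sym2 V) := by
  set D := (pathPowerPairs m k).image fun p => s(w p.1, w p.2)
  have hD : #D = #(pathPowerPairs m k) := by
    refine card_image_of_injOn fun p hp q hq hpq => ?_
    simp only [mem_coe, pathPowerPairs, mem_filter, mem_univ, true_and] at hp hq
    rcases Sym2.eq_iff.mp hpq with ⟨h₁, h₂⟩ | ⟨h₁, h₂⟩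
    · exact Prod.ext (w.injective h₁) (w.injective h₂)
    · have := congrArg Fin.val (w.injective h₁)
      have := congrArg Fin.val (w.injective h₂)
      omega
  rw [← hD]
  refine card_mul_two_pow_le_of_eqOn _ D fun f hf g hg x hx => ?_
  obtain ⟨p, hp, rfl⟩ := mem_image.mp hx
  simp only [pathPowerPairs, mem_filter, mem_univ, true_and] at hf hg hp
  exact (hf p.1 p.2 hp.1 hp.2).2.trans (hg p.1 p.2 hp.1 hp.2).2.symm

open Classical in
theorem exists_orient_not_containsPathPower {k m : ℕ}
    (h : (Fintype.card V).descFactorial m < 2 ^ #(pathPowerPairs m k)) :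
    ∃ f : Sym2 V → Bool, ¬ ContainsPathPower (orient f) k m := by
  by_contra! hall
  set E := 2 ^ #(pathPowerPairs m k)
  set N := 2 ^ Fintype.card (Sym2 V)
  let bad (w : Fin m ↪ V) : Finset (Sym2 V → Bool) :=
    {f | ∀ i j : Fin m, (i : ℕ) < j → (j : ℕ) ≤ i + k → orient f (w i) (w j)}
  have hcover : (univ : Finset (Sym2 V → Bool)) ⊆ univ.biUnion bad := fun f _ =>
    let ⟨v, hv, hpath⟩ := hall f
    mem_biUnion.mpr ⟨⟨v, hv⟩, mem_univ _, mem_filter.mpr ⟨mem_univ _, hpath⟩⟩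
  have : N * E < N * E :=
    calc N * E = #(univ : Finset (Sym2 V → Bool)) * E := by simp [N]
      _ ≤ (∑ w, #(bad w)) * E :=
        Nat.mul_le_mul_right _ ((card_le_card hcover).trans card_biUnion_le)
      _ ≤ ∑ _w : Fin m ↪ V, N := by
        rw [sum_mul]
        exact sum_le_sum fun w _ => card_pathPower_orient_mul_le k w
      _ = (Fintype.card V).descFactorial m * N := by simp [Fintype.card_embedding_eq]
      _ < E * N := Nat.mul_lt_mul_of_pos_right h (by positivity)
      _ = N * E := mul_comm _ _
  exact lt_irrefl _ this

theorem exists_orient_not_containsPathPower_triangular {k : ℕ} (hk : 2 ≤ k) :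
    ∃ f : Sym2 (Fin (2 ^ (k - 1))) → Bool,
      ¬ ContainsPathPower (orient f) k (k * (k + 1) / 2) := by
  set m := k * (k + 1) / 2
  have hm : k * (k + 1) = 2 * m := (Nat.two_mul_div_two_of_even (Nat.even_mul_succ_self k)).symm
  apply exists_orient_not_containsPathPower
  have hpairs := card_pathPowerPairs (k := k) (m := m) (by nlinarith)
  have hcard : #(pathPowerPairs m k) = (k - 1) * m := by
    rw [hm, show 2 * k * m = 2 * (k * m) by ring] at hpairs
    rw [Nat.sub_one_mul]
    omega
  rw [Fintype.card_fin, hcard, pow_mul]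
  exact Nat.descFactorial_lt_pow (by positivity) (by nlinarith)

end Counting

theorem upper_bound_construction {k n : ℕ} (hk : 5 ≤ k) (hn : k * (k + 1) * 2 ^ k ≤ n) :
    ∃ T : Fin n → Fin n → Prop, IsTournament T ∧
      ∀ ℓ : ℕ, ((k * (k + 1) * n : ℕ) : ℝ) / 2 ^ k ≤ (ℓ : ℝ) →
        ¬ ContainsPathPower T k (ℓ + 1) := by
  set b := 2 ^ (k - 1)
  set m := k * (k + 1) / 2
  obtain ⟨f, hf⟩ := exists_orient_not_containsPathPower_triangular (by omega : 2 ≤ k)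
  have hm : k * (k + 1) = 2 * m := (Nat.two_mul_div_two_of_even (Nat.even_mul_succ_self k)).symm
  have hm0 : 0 < m := by nlinarith
  have hb : 2 ^ k = 2 * b := by rw [← pow_succ']; congr 1; omega
  have hb0 : 0 < b := by positivity
  set Q := n / b + 1
  let e : Fin n ↪ Fin Q × Fin b :=
    (Fin.castLEEmb (by simpa [Q, add_mul] using (Nat.lt_div_mul_add (a := n) hb0).le)).trans
      finProdFinEquiv.symm.toEmbedding
  refine ⟨fun u v => Prod.Lex (· < ·) (orient f) (e u) (e v),
    (isTournament_orient f).prodLex.comap e.injective, fun ℓ hℓ hpath => ?_⟩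
  have hlen : ℓ + 1 ≤ (m - 1) * Q := by
    simpa using (hpath.of_comap e.injective).le_mul_card_of_prodLex (by omega) hf
  have hℓ' : m * n ≤ ℓ * b := by
    rw [div_le_iff₀ (by positivity)] at hℓ
    have : k * (k + 1) * n ≤ ℓ * 2 ^ k := by exact_mod_cast hℓ
    rw [hm, hb] at this
    nlinarith
  have hQ : Q * b ≤ n + b := by simpa [Q, add_mul] using Nat.div_mul_le_self n b
  obtain ⟨m', hm'⟩ : ∃ m', m = m' + 1 := ⟨m - 1, by omega⟩
  rw [hm', Nat.add_sub_cancel] at hlen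
  rw [hm'] at hℓ'
  rw [hm, hb, hm'] at hn
  -- `m n + b ≤ (ℓ + 1) b ≤ m' (n + b)` would force `n < m b`.
  nlinarith [Nat.mul_le_mul_right b hlen, Nat.mul_le_mul_left m' hQ]
end

section
/- Let x_1,...,x_n be a median ordering of a tournament with no bad index, and let I be the set of indices i such that x_i → x_{i-2} is NOT an edge (where 1, 2 ∈ I by convention). If an index i+2 is not in I, then both i and i+1 are in I. Consequently, |I| ≥ ⌈2n/3⌉. -/
/-- Number of forward edges of the ordering `x 0, x 1, ..., x (n-1)`. -/
def fwdCount {n : ℕ} (T : Fin n → Fin n → Prop) [DecidableRel T]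
    (x : Equiv.Perm (Fin n)) : ℕ :=
  (Finset.univ.filter fun p : Fin n × Fin n => p.1 < p.2 ∧ T (x p.1) (x p.2)).card

/-- A median ordering maximizes the number of forward edges. -/
def IsMedianOrdering {n : ℕ} (T : Fin n → Fin n → Prop) [DecidableRel T]
    (x : Equiv.Perm (Fin n)) : Prop :=
  ∀ y : Equiv.Perm (Fin n), fwdCount T y ≤ fwdCount T x

/-!
In a median ordering the back edges `x (a+2) → x a` and `x (a+3) → x (a+1)` cannot both occur:
three adjacent transpositions would turn both into forward edges while reversing only one other
pair. With the absence of bad indices this shows that `i + 2 ∉ I` forces `i, i + 1 ∈ I`, so the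
indices outside `I` are at least `2` and pairwise at distance at least `3`; there are at most
`n / 3` of them.
-/

theorem IsTournament.asymm {V : Type*} {T : V → V → Prop} (hT : IsTournament T) {u v : V}
    (h : T u v) : ¬ T v u := by
  by_cases huv : u = v
  · subst huv
    exact absurd h (hT.1 u)
  · exact (hT.2 u v huv).1 h

theorem Finset.card_erase_add_ite {α : Type*} [DecidableEq α] (s : Finset α) (a : α) :
    (s.erase a).card + (if a ∈ s then 1 else 0) = s.card := by
  split_ifs with h
  · exact Finset.card_erase_add_one h
  · rw [Finset.erase_eq_of_notMem h, add_zero]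

theorem swap_lt_swap_iff_of_val_eq_succ {n : ℕ} {p q u v : Fin n} (hpq : (q : ℕ) = p + 1)
    (hpq' : (u, v) ≠ (p, q)) (hqp' : (u, v) ≠ (q, p)) :
    Equiv.swap p q u < Equiv.swap p q v ↔ u < v := by
  simp only [ne_eq, Prod.mk.injEq, Fin.ext_iff] at hpq' hqp'
  simp only [Equiv.swap_apply_def, Fin.lt_def, Fin.ext_iff]
  split_ifs <;> omega

theorem fwdCount_swap_adjacent {n : ℕ} (T : Fin n → Fin n → Prop) [DecidableRel T]
    (x : Equiv.Perm (Fin n)) {p q : Fin n} (hpq : (q : ℕ) = p + 1) :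
    fwdCount T ((Equiv.swap p q).trans x) + (if T (x p) (x q) then 1 else 0) =
      fwdCount T x + (if T (x q) (x p) then 1 else 0) := by
  let S := Finset.univ.filter fun e : Fin n × Fin n => e.1 < e.2 ∧ T (x e.1) (x e.2)
  let S' := Finset.univ.filter fun e : Fin n × Fin n =>
    Equiv.swap p q e.1 < Equiv.swap p q e.2 ∧ T (x e.1) (x e.2)
  have hreindex : fwdCount T ((Equiv.swap p q).trans x) = S'.card :=
    Finset.card_equiv ((Equiv.swap p q).prodCongr (Equiv.swap p q)) fun e => by
      rw [Finset.mem_filter, Finset.mem_filter]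
      simp
  have hpq_mem : (p, q) ∈ S ↔ T (x p) (x q) := by
    simp only [S, Finset.mem_filter, Finset.mem_univ, Fin.lt_def, hpq, Nat.lt_add_one, true_and]
  have hqp_mem : (q, p) ∈ S' ↔ T (x q) (x p) := by
    simp only [S', Finset.mem_filter, Finset.mem_univ, Equiv.swap_apply_left,
      Equiv.swap_apply_right, Fin.lt_def, hpq, Nat.lt_add_one, true_and]
  have hqp : ¬ q < p := by
    rw [Fin.lt_def]
    omega
  have herase : S.erase (p, q) = S'.erase (q, p) := by
    ext ⟨u, v⟩
    by_cases h₁ : (u, v) = (p, q)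
    · simp [h₁, S', hqp]
    by_cases h₂ : (u, v) = (q, p)
    · simp [h₂, S, hqp]
    simp only [Finset.mem_erase, ne_eq, h₁, h₂, not_false_eq_true, true_and, S, S',
      Finset.mem_filter, Finset.mem_univ, swap_lt_swap_iff_of_val_eq_succ hpq h₁ h₂]
  have hS := Finset.card_erase_add_ite S (p, q)
  have hS' := Finset.card_erase_add_ite S' (q, p)
  simp only [hpq_mem] at hS
  simp only [hqp_mem, ← herase] at hS'
  rw [hreindex, show fwdCount T x = S.card from rfl]
  omega

theorem IsMedianOrdering.not_crossing_back_edges {n : ℕ} {T : Fin n → Fin n → Prop}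
    [DecidableRel T] (hT : IsTournament T) {x : Equiv.Perm (Fin n)} (hx : IsMedianOrdering T x)
    (a : ℕ) (ha : a + 3 < n) (hback : T (x ⟨a + 2, by omega⟩) (x ⟨a, by omega⟩)) :
    ¬ T (x ⟨a + 3, ha⟩) (x ⟨a + 1, by omega⟩) := by
  intro hback'
  set A : Fin n := ⟨a, by omega⟩
  set B : Fin n := ⟨a + 1, by omega⟩
  set C : Fin n := ⟨a + 2, by omega⟩
  set D : Fin n := ⟨a + 3, ha⟩
  -- reorder `x A, x B, x C, x D` into `x C, x A, x D, x B`
  have e₁ := fwdCount_swap_adjacent T x (p := B) (q := C) rfl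
  have e₂ := fwdCount_swap_adjacent T ((Equiv.swap B C).trans x) (p := A) (q := B) rfl
  have e₃ := fwdCount_swap_adjacent T ((Equiv.swap A B).trans ((Equiv.swap B C).trans x))
    (p := C) (q := D) rfl
  have hle := hx ((Equiv.swap C D).trans ((Equiv.swap A B).trans ((Equiv.swap B C).trans x)))
  have hAB : A ≠ B := by simp [A, B]
  have hAC : A ≠ C := by simp [A, C]
  have hAD : A ≠ D := by simp [A, D]
  have hBC : B ≠ C := by simp [B, C]
  have hBD : B ≠ D := by simp [B, D]
  have hCD : C ≠ D := by simp [C, D]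
  simp only [Equiv.trans_apply, Equiv.swap_apply_left, Equiv.swap_apply_right,
    Equiv.swap_apply_of_ne_of_ne hAB hAC, Equiv.swap_apply_of_ne_of_ne hAC.symm hBC.symm,
    Equiv.swap_apply_of_ne_of_ne hAD.symm hBD.symm,
    Equiv.swap_apply_of_ne_of_ne hBD.symm hCD.symm] at e₂ e₃
  have h₁ := hT.asymm hback
  have h₂ := hT.asymm hback'
  split_ifs at e₁ e₂ e₃ <;> omega

theorem card_le_div_three_of_add_three_le {n : ℕ} (J : Finset (Fin n))
    (htwo : ∀ k ∈ J, 2 ≤ (k : ℕ)) (hsep : ∀ j ∈ J, ∀ k ∈ J, j < k → (j : ℕ) + 3 ≤ k) :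
    J.card ≤ n / 3 :=
  calc J.card ≤ (Finset.range (n / 3)).card := by
        refine Finset.card_le_card_of_injOn (fun k => ((k : ℕ) - 2) / 3) (fun k hk => ?_) ?_
        · have := htwo k hk
          have := k.isLt
          simp only [Finset.coe_range, Set.mem_Iio]
          omega
        · intro j hj k hk hjk
          have := htwo j hj
          have := htwo k hk
          simp only at hjk
          rcases lt_trichotomy j k with h | h | h
          · have := hsep j hj k hk h
            omega
          · exact h
          · have := hsep k hk j hj h
            omega
    _ = n / 3 := Finset.card_range _

theorem le_card_of_notMem_add_two {n : ℕ} (I : Finset (Fin n))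
    (hsmall : ∀ i : Fin n, (i : ℕ) < 2 → i ∈ I)
    (hstep : ∀ i : ℕ, (h2 : i + 2 < n) → (⟨i + 2, h2⟩ : Fin n) ∉ I →
      (⟨i, Nat.lt_of_add_right_lt h2⟩ : Fin n) ∈ I ∧ (⟨i + 1, Nat.lt_of_succ_lt h2⟩ : Fin n) ∈ I) :
    (2 * n + 2) / 3 ≤ I.card := by
  have htwo : ∀ k ∈ Iᶜ, 2 ≤ (k : ℕ) := fun k hk => by
    by_contra h
    exact Finset.mem_compl.1 hk (hsmall k (by omega))
  have hsep : ∀ j ∈ Iᶜ, ∀ k ∈ Iᶜ, j < k → (j : ℕ) + 3 ≤ k := by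
    intro j hj k hk hjk
    obtain ⟨i, hik⟩ : ∃ i, (k : ℕ) = i + 2 := ⟨k - 2, by have := htwo k hk; omega⟩
    obtain ⟨hi, hi₁⟩ := hstep i (hik ▸ k.isLt)
      (by rw [show (⟨i + 2, _⟩ : Fin n) = k from Fin.ext hik.symm]; exact Finset.mem_compl.1 hk)
    have hj₀ : j ≠ ⟨i, by omega⟩ := fun h => Finset.mem_compl.1 hj (h ▸ hi)
    have hj₁ : j ≠ ⟨i + 1, by omega⟩ := fun h => Finset.mem_compl.1 hj (h ▸ hi₁)
    simp only [ne_eq, Fin.ext_iff] at hj₀ hj₁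
    rw [Fin.lt_def] at hjk
    omega
  have hcompl := Finset.card_add_card_compl I
  rw [Fintype.card_fin] at hcompl
  have := card_le_div_three_of_add_three_le Iᶜ htwo hsep
  omega

theorem good_indices_dense {n : ℕ} (T : Fin n → Fin n → Prop) [DecidableRel T]
    (hT : IsTournament T) (x : Equiv.Perm (Fin n)) (hx : IsMedianOrdering T x)
    (hbad : ∀ a : ℕ, (ha : a + 4 < n) →
      T (x ⟨a + 2, by omega⟩) (x ⟨a, by omega⟩) →
        ¬ T (x ⟨a + 4, ha⟩) (x ⟨a + 2, by omega⟩) ∧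
        ¬ T (x ⟨a + 4, ha⟩) (x ⟨a + 1, by omega⟩))
    (I : Finset (Fin n))
    (hI : I = Finset.univ.filter fun i : Fin n =>
      (i : ℕ) < 2 ∨ ¬ T (x i) (x ⟨(i : ℕ) - 2, Nat.lt_of_le_of_lt (Nat.sub_le _ _) i.isLt⟩)) :
    (∀ i : ℕ, (h2 : i + 2 < n) → (⟨i + 2, h2⟩ : Fin n) ∉ I →
      (⟨i, by omega⟩ : Fin n) ∈ I ∧ (⟨i + 1, by omega⟩ : Fin n) ∈ I) ∧
    (2 * n + 2) / 3 ≤ I.card := by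
  have hmem : ∀ i : Fin n, i ∈ I ↔ (i : ℕ) < 2 ∨ ¬ T (x i) (x ⟨(i : ℕ) - 2, by omega⟩) := by
    simp [hI]
  refine ⟨?step, le_card_of_notMem_add_two I (fun i hi => (hmem i).2 (Or.inl hi)) ?step⟩
  intro i h2 hi
  simp only [hmem, not_or, not_not, Nat.add_sub_cancel] at hi ⊢
  obtain ⟨-, hback⟩ := hi
  constructor
  · rcases lt_or_ge i 2 with hi | hi
    · exact Or.inl hi
    obtain ⟨a, rfl⟩ : ∃ a, i = a + 2 := ⟨i - 2, by omega⟩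
    exact Or.inr fun h => (hbad a h2 (by simpa using h)).1 hback
  · rcases lt_or_ge i 1 with hi | hi
    · exact Or.inl (by omega)
    obtain ⟨a, rfl⟩ : ∃ a, i = a + 1 := ⟨i - 1, by omega⟩
    exact Or.inr fun h => hx.not_crossing_back_edges hT a h2 (by simpa using h) hback
end
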